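/- The endomorphism dga of the complete resolution of Z/p over Z/p² is quasi-isomorphic to the dga A = Z⟨e, x, y⟩/(e² = 0, ex + xe = x², xy = yx = 1) with |e| = |x| = 1, |y| = −1, and differential de = p, dx = 0, dy = 0. In particular there is a dga map A → End(P) that is a quasi-isomorphism, where P has Z/p² in every degree with differential multiplication by p. -/

import Mathlib

/-!
With `τ(m) = (-1)^(m(m-1)/2)` one has `X_i = τ(i) τ(i+1)`, so `X^n` has components
`τ(i) τ(i+n)`, and the map sends `α x^n + β e x^(n-1)` to `X^n (α + β χ)` with `χ` the
indicator of `i + n` odd. It is multiplicative because `χ` is idempotent and shifting degrees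
by an odd `m` replaces `χ` by `1 - χ`, which is exactly the twist in the product of `A`.

Both homologies are `ℤ/p` in each degree, generated by `x^n` and `X^n`. In `ℤ/p²` the
annihilator of `p` is `pℤ/p²`, so a cycle `f` of `End(P)` satisfies `f_k ≡ ± f_(k-1) (mod p)`
and, after subtracting a multiple of `X^n`, vanishes mod `p` everywhere; and every `p c` is a
boundary because `g ↦ (g_k ± g_(k-1))_k` is onto (solve the recursion in both directions).
-/

/-! The dga `A = ℤ⟨e, x, y⟩/(e² = 0, ex + xe = x², xy = yx = 1; de = p, dx = dy = 0)`
with `|e| = |x| = 1`, `|y| = −1`, modelled concretely: its degree-`n` part is free on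
`x^n` and `e x^{n−1}` (with `x^{−1} = y`), so it is `ℤ × ℤ`, a pair `(α, β)`
representing `α x^n + β e x^{n−1}`. -/

/-- Multiplication of a degree-`m` element by a degree-`n` element of `A`. -/
def mulA (m : ℤ) (a b : ℤ × ℤ) : ℤ × ℤ :=
  if Even m then (a.1 * b.1, a.1 * b.2 + a.2 * b.1 + a.2 * b.2)
  else (a.1 * b.1 + a.1 * b.2, -(a.1 * b.2) + a.2 * b.1)

/-- The differential of `A` (from degree `n` to degree `n − 1`): `d(α x^n + β e x^{n−1}) =
p β x^{n−1}`. -/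
def dA (p : ℕ) (a : ℤ × ℤ) : ℤ × ℤ := ((p : ℤ) * a.2, 0)

/-- Degree-`n` component of the endomorphism dga `End(P)` of the complete resolution `P`
of `Z/p` over `Z/p²` (`P` has `Z/p²` in every degree, differential multiplication
by `p`). -/
abbrev EndPdeg (p : ℕ) (_ : ℤ) := ℤ → ZMod (p ^ 2)

/-- Composition product on `End(P)`: for `f` of degree `m` and `g` of degree `n`,
`(f ∘ g)_i = f_{i+n} g_i`. -/
def mulE (p : ℕ) (n : ℤ) (f g : ℤ → ZMod (p ^ 2)) : ℤ → ZMod (p ^ 2) :=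
  fun i => f (i + n) * g i

/-- The differential of `End(P)` out of degree `n`:
`(df)_k = p (f_k + (−1)^{n+1} f_{k−1})`. -/
def endPd (p : ℕ) (n : ℤ) : EndPdeg p n →+ EndPdeg p (n - 1) :=
  AddMonoidHom.mk'
    (fun f k => (p : ZMod (p ^ 2)) *
      (f k + ((Int.negOnePow (n + 1) : ℤ) : ZMod (p ^ 2)) * f (k - 1)))
    (by intro f g; funext k; simp only [Pi.add_apply]; ring)

/-- The element `X ∈ End(P)₁`, `X_i = (−1)^i`. -/
def Xe (p : ℕ) : ℤ → ZMod (p ^ 2) := fun i => ((Int.negOnePow i : ℤ) : ZMod (p ^ 2))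

/-- The element `Y ∈ End(P)₋₁`, `Y_i = (−1)^{i+1}`. -/
def Ye (p : ℕ) : ℤ → ZMod (p ^ 2) := fun i => ((Int.negOnePow (i + 1) : ℤ) : ZMod (p ^ 2))

/-- The element `E ∈ End(P)₁`, `E_i = 1` for even `i` and `0` for odd `i`. -/
def Ee (p : ℕ) : ℤ → ZMod (p ^ 2) := fun i => if Even i then 1 else 0

lemma Int.cast_units_mul_self {R : Type*} [Ring R] (u : ℤˣ) :
    ((u : ℤ) : R) * (u : ℤ) = 1 := by
  rw [← Int.cast_mul, ← Units.val_mul, Int.units_mul_self, Units.val_one, Int.cast_one]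

lemma Int.isUnit_cast_units {R : Type*} [Ring R] (u : ℤˣ) : IsUnit ((u : ℤ) : R) :=
  u.isUnit.map (Int.castRingHom R)

def triSign (m : ℤ) : ℤˣ := (m * (m - 1) / 2).negOnePow

lemma triSign_add_one (m : ℤ) : triSign (m + 1) = m.negOnePow * triSign m := by
  obtain ⟨k, hk⟩ := Int.even_mul_pred_self m
  have hk' : (m + 1) * (m + 1 - 1) = (k + m) + (k + m) := by linear_combination hk
  rw [triSign, triSign, hk, hk', ← Int.negOnePow_add]
  congr 1
  omega

-- `(X^n)_i`, writing `τ` for `triSign`.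
def xPowSign (n i : ℤ) : ℤˣ := triSign i * triSign (i + n)

lemma xPowSign_mul (m n i : ℤ) : xPowSign m (i + n) * xPowSign n i = xPowSign (m + n) i := by
  rw [xPowSign, xPowSign, xPowSign, add_comm m n, ← add_assoc]
  calc triSign (i + n) * triSign (i + n + m) * (triSign i * triSign (i + n))
      = triSign i * triSign (i + n + m) * (triSign (i + n) * triSign (i + n)) := by ac_rfl
    _ = triSign i * triSign (i + n + m) := by rw [Int.units_mul_self, mul_one]

lemma xPowSign_zero (i : ℤ) : xPowSign 0 i = 1 := by
  rw [xPowSign, add_zero, Int.units_mul_self]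

lemma xPowSign_one (i : ℤ) : xPowSign 1 i = i.negOnePow := by
  rw [xPowSign, triSign_add_one, mul_left_comm, Int.units_mul_self, mul_one]

lemma xPowSign_neg_one (i : ℤ) : xPowSign (-1) i = (i + 1).negOnePow := by
  have h := triSign_add_one (i - 1)
  rw [sub_add_cancel] at h
  rw [xPowSign, ← sub_eq_add_neg, h, mul_assoc, Int.units_mul_self, mul_one,
    Int.negOnePow_eq_iff]
  exact ⟨-1, by ring⟩

lemma xPowSign_add_one (n i : ℤ) : xPowSign n (i + 1) = n.negOnePow * xPowSign n i := by
  calc xPowSign n (i + 1)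
      = i.negOnePow * triSign i * (i.negOnePow * n.negOnePow * triSign (i + n)) := by
        rw [xPowSign, add_right_comm, triSign_add_one, triSign_add_one, Int.negOnePow_add]
    _ = i.negOnePow * i.negOnePow * (n.negOnePow * xPowSign n i) := by rw [xPowSign]; ac_rfl
    _ = n.negOnePow * xPowSign n i := by rw [Int.units_mul_self, one_mul]

lemma xPowSign_eq_mul_xPowSign_sub_one (n i : ℤ) :
    xPowSign n i = (i + n - 1).negOnePow * xPowSign (n - 1) i := by
  rw [← xPowSign_one, ← add_sub_assoc', xPowSign_mul, add_sub_cancel]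

def oddInd (R : Type*) [Ring R] (j : ℤ) : R := if Even j then 0 else 1

section Indicator

variable {R : Type*} [Ring R]

lemma isIdempotentElem_oddInd (j : ℤ) : IsIdempotentElem (oddInd R j) := by
  unfold oddInd; split_ifs <;> simp [IsIdempotentElem]

lemma oddInd_sub (j m : ℤ) :
    oddInd R (j - m) = if Even m then oddInd R j else 1 - oddInd R j := by
  unfold oddInd
  by_cases hm : Even m <;> by_cases hj : Even j <;> simp [hm, hj, Int.even_sub]

lemma oddInd_add_one (j : ℤ) : oddInd R (j + 1) = oddInd R j + (j.negOnePow : ℤ) := by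
  unfold oddInd
  by_cases hj : Even j
  · simp [hj, Int.negOnePow_even j hj]
  · simp [hj, Int.negOnePow_odd j (Int.not_even_iff_odd.mp hj)]

end Indicator

def evalA {R : Type*} [Ring R] (d : R) (a : ℤ × ℤ) : R := a.1 + a.2 * d

lemma evalA_mulA {R : Type*} [CommRing R] {d : R} (hd : IsIdempotentElem d) (m : ℤ)
    (a b : ℤ × ℤ) :
    evalA d (mulA m a b) = evalA d a * evalA (if Even m then d else 1 - d) b := by
  unfold evalA mulA
  split_ifs
  · push_cast; linear_combination (-(a.2 * b.2 : R)) * hd.eq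
  · push_cast; linear_combination (a.2 * b.2 : R) * hd.eq

section EndP

variable (p : ℕ)

-- `E X^(n-1)` is `X^n` with the components of even target degree `i + n` killed.
def toEndP (n : ℤ) : (ℤ × ℤ) →+ EndPdeg p n :=
  AddMonoidHom.mk' (fun a i => (xPowSign n i : ℤ) * evalA (oddInd _ (i + n)) a) fun a b => by
    funext i
    simp only [evalA, Prod.fst_add, Prod.snd_add, Pi.add_apply]
    push_cast
    ring

lemma toEndP_apply (n : ℤ) (a : ℤ × ℤ) (i : ℤ) :
    toEndP p n a i = (xPowSign n i : ℤ) * evalA (oddInd _ (i + n)) a := rfl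

lemma endPd_apply (n : ℤ) (f : EndPdeg p n) (k : ℤ) :
    endPd p n f k = p * (f k + ((n + 1).negOnePow : ℤ) * f (k - 1)) := rfl

lemma toEndP_mulA (m n : ℤ) (a b : ℤ × ℤ) :
    toEndP p (m + n) (mulA m a b) = mulE p n (toEndP p m a) (toEndP p n b) := by
  funext i
  have hsign := congrArg (fun u : ℤˣ => ((u : ℤ) : ZMod (p ^ 2))) (xPowSign_mul m n i)
  have hind : oddInd (ZMod (p ^ 2)) (i + n) =
      if Even m then oddInd _ (i + (m + n)) else 1 - oddInd _ (i + (m + n)) := by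
    rw [← oddInd_sub]; ring_nf
  push_cast at hsign
  rw [mulE, toEndP_apply, toEndP_apply, toEndP_apply, evalA_mulA (isIdempotentElem_oddInd _),
    ← hind, add_right_comm, ← add_assoc, ← hsign]
  ring

lemma toEndP_dA (n : ℤ) (a : ℤ × ℤ) :
    toEndP p (n - 1) (dA p a) = endPd p n (toEndP p n a) := by
  funext k
  set u : ZMod (p ^ 2) := ((n.negOnePow : ℤ) : ZMod (p ^ 2))
  set w : ZMod (p ^ 2) := (((k + n - 1).negOnePow : ℤ) : ZMod (p ^ 2))
  set Y : ZMod (p ^ 2) := ((xPowSign (n - 1) k : ℤ) : ZMod (p ^ 2))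
  have hu : u * u = 1 := Int.cast_units_mul_self _
  have hw : w * w = 1 := Int.cast_units_mul_self _
  have hX : (xPowSign n k : ZMod (p ^ 2)) = w * Y := by
    rw [xPowSign_eq_mul_xPowSign_sub_one]; push_cast; rfl
  have hX' : (xPowSign n (k - 1) : ZMod (p ^ 2)) = u * (w * Y) := by
    have h := xPowSign_add_one n (k - 1)
    rw [sub_add_cancel] at h
    rw [← hX, h]
    push_cast
    linear_combination (-(xPowSign n (k - 1) : ZMod (p ^ 2))) * hu
  have hν : (((n + 1).negOnePow : ℤ) : ZMod (p ^ 2)) = -u := by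
    rw [Int.negOnePow_succ]; push_cast; rfl
  have hχ : oddInd (ZMod (p ^ 2)) (k + n) = oddInd _ (k - 1 + n) + w := by
    rw [sub_add_eq_add_sub, ← oddInd_add_one, sub_add_cancel]
  rw [endPd_apply, toEndP_apply, toEndP_apply, toEndP_apply, hX, hX', hν, hχ]
  simp only [evalA, dA]
  push_cast
  linear_combination (p * w * Y * (a.1 + a.2 * oddInd _ (k - 1 + n))) * hu - (p * a.2 * Y) * hw

lemma toEndP_one : toEndP p 0 (1, 0) = fun _ => 1 := by
  funext i; simp [toEndP_apply, evalA, xPowSign_zero]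

lemma toEndP_x : toEndP p 1 (1, 0) = Xe p := by
  funext i; simp [toEndP_apply, evalA, xPowSign_one, Xe]

lemma toEndP_e : toEndP p 1 (0, 1) = Ee p := by
  funext i
  by_cases hi : Even i <;>
    simp [toEndP_apply, evalA, xPowSign_one, Ee, oddInd, hi, Int.negOnePow_even]

lemma toEndP_y : toEndP p (-1) (1, 0) = Ye p := by
  funext i; simp [toEndP_apply, evalA, xPowSign_neg_one, Ye]

end EndP

lemma ZMod.natCast_dvd_of_natCast_mul_eq_zero {p : ℕ} (hp : p ≠ 0) {x : ZMod (p ^ 2)}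
    (h : (p : ZMod (p ^ 2)) * x = 0) : (p : ZMod (p ^ 2)) ∣ x := by
  have : NeZero (p ^ 2) := ⟨pow_ne_zero 2 hp⟩
  rw [← ZMod.natCast_zmod_val x, ← Nat.cast_mul, ZMod.natCast_eq_zero_iff] at h
  have h' : p * p ∣ p * x.val := by rw [← pow_two]; exact h
  obtain ⟨c, hc⟩ := Nat.dvd_of_mul_dvd_mul_left (Nat.pos_of_ne_zero hp) h'
  refine ⟨c, ?_⟩
  conv_lhs => rw [← ZMod.natCast_zmod_val x]
  rw [hc, Nat.cast_mul]

lemma ZMod.intCast_dvd_of_natCast_dvd_intCast {n p : ℕ} (hpn : p ∣ n) {z : ℤ}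
    (h : (p : ZMod n) ∣ (z : ZMod n)) : (p : ℤ) ∣ z := by
  obtain ⟨c, hc⟩ := h
  have := congrArg (ZMod.castHom hpn (ZMod p)) hc
  rwa [map_intCast, map_mul, map_natCast, ZMod.natCast_self, zero_mul,
    ZMod.intCast_zmod_eq_zero_iff_dvd] at this

lemma forall_mem_of_add_mul_sub_one_mem {R : Type*} [CommRing R] (I : Ideal R) {ν : R}
    (hν : IsUnit ν) {x : ℤ → R} (hx : ∀ k, x k + ν * x (k - 1) ∈ I) (h0 : x 0 ∈ I) :
    ∀ k, x k ∈ I := by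
  intro k
  induction k with
  | zero => exact h0
  | succ i ih =>
    have h := I.sub_mem (hx (i + 1)) (I.mul_mem_left ν ih)
    rwa [add_sub_cancel_right, add_sub_cancel_right] at h
  | pred i ih =>
    have h := I.sub_mem (hx (-i)) ih
    rwa [add_sub_cancel_left, I.unit_mul_mem_iff_mem hν] at h

lemma exists_add_mul_sub_one_eq {R : Type*} [Ring R] {μ : R} (hμ : IsUnit μ) (c : ℤ → R) :
    ∃ g : ℤ → R, ∀ k, g k + μ * g (k - 1) = c k := by
  let g : ℤ → R := fun k => k.inductionOn' 0 (c 0)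
    (fun k _ gk => c (k + 1) - μ * gk) (fun k _ gk => ↑hμ.unit⁻¹ * (c k - gk))
  refine ⟨g, fun k => ?_⟩
  rcases le_or_gt k 0 with hk | hk
  · simp only [g, Int.inductionOn'_sub_one hk, ← mul_assoc, hμ.mul_val_inv, one_mul]
    abel
  · obtain ⟨j, hj, rfl⟩ : ∃ j, 0 ≤ j ∧ k = j + 1 := ⟨k - 1, by omega, by ring⟩
    simp only [g, Int.inductionOn'_add_one hj, add_sub_cancel_right]
    abel

section Homology

variable {p : ℕ}

lemma exists_endPd_eq_of_forall_dvd {n : ℤ} {f : EndPdeg p n}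
    (hf : ∀ k, (p : ZMod (p ^ 2)) ∣ f k) :
    ∃ g : EndPdeg p (n + 1), endPd p (n + 1) g = f := by
  choose c hc using hf
  obtain ⟨g, hg⟩ := exists_add_mul_sub_one_eq (Int.isUnit_cast_units (n + 1 + 1).negOnePow) c
  exact ⟨g, funext fun k => by rw [endPd_apply, hg, hc]⟩

lemma forall_dvd_of_endPd_eq_zero (hp : p ≠ 0) {n : ℤ} {f : EndPdeg p n}
    (hf : endPd p n f = 0) (h0 : (p : ZMod (p ^ 2)) ∣ f 0) :
    ∀ k, (p : ZMod (p ^ 2)) ∣ f k := by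
  simp only [← Ideal.mem_span_singleton] at h0 ⊢
  refine forall_mem_of_add_mul_sub_one_mem _ (Int.isUnit_cast_units (n + 1).negOnePow)
    (fun k => ?_) h0
  rw [Ideal.mem_span_singleton]
  exact ZMod.natCast_dvd_of_natCast_mul_eq_zero hp (congrFun hf k)

lemma toEndP_homology_surjective (hp : p ≠ 0) (n : ℤ) (f : EndPdeg p n)
    (hf : endPd p n f = 0) :
    ∃ a : ℤ × ℤ, dA p a = (0, 0) ∧
      ∃ g : EndPdeg p (n + 1), endPd p (n + 1) g = f - toEndP p n a := by
  obtain ⟨α, hα⟩ := ZMod.intCast_surjective ((xPowSign n 0 : ℤ) * f 0 : ZMod (p ^ 2))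
  refine ⟨(α, 0), by simp [dA], exists_endPd_eq_of_forall_dvd
    (forall_dvd_of_endPd_eq_zero hp ?_ ⟨0, ?_⟩)⟩
  · rw [map_sub, hf, ← toEndP_dA, dA, mul_zero, zero_sub, neg_eq_zero]
    exact map_zero _
  · rw [Pi.sub_apply, toEndP_apply, evalA, hα]
    linear_combination (-f 0) * Int.cast_units_mul_self (R := ZMod (p ^ 2)) (xPowSign n 0)

lemma toEndP_homology_injective (hp : p ≠ 0) (n : ℤ) (a : ℤ × ℤ) (ha : dA p a = (0, 0))
    (h : ∃ g : EndPdeg p (n + 1), endPd p (n + 1) g = toEndP p n a) :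
    ∃ b : ℤ × ℤ, dA p b = a := by
  obtain ⟨g, hg⟩ := h
  have ha2 : a.2 = 0 := by simpa [dA, hp] using ha
  have hdvd : (p : ZMod (p ^ 2)) ∣ (a.1 : ZMod (p ^ 2)) := by
    refine ⟨(xPowSign n 0 : ℤ) *
      (g 0 + (((n + 1 + 1).negOnePow : ℤ) : ZMod (p ^ 2)) * g (-1)), ?_⟩
    have h0 := congrFun hg 0
    rw [endPd_apply, toEndP_apply, evalA, ha2] at h0
    push_cast at h0
    linear_combination (-(xPowSign n 0 : ZMod (p ^ 2))) * h0
      - (a.1 : ZMod (p ^ 2)) * Int.cast_units_mul_self (R := ZMod (p ^ 2)) (xPowSign n 0)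
  obtain ⟨t, ht⟩ := ZMod.intCast_dvd_of_natCast_dvd_intCast (dvd_pow_self p two_ne_zero) hdvd
  exact ⟨(0, t), by ext <;> simp [dA, ht, ha2]⟩

end Homology

/-- The endomorphism dga of the complete resolution of `Z/p` over
`Z/p²` is quasi-isomorphic to `A = ℤ⟨e, x, y⟩/(e² = 0, ex + xe = x², xy = yx = 1)` with
`de = p, dx = dy = 0`: there is a map of dgas `A → End(P)` sending `x ↦ X`, `y ↦ Y`,
`e ↦ E` which is a quasi-isomorphism. -/
theorem stmt11 (p : ℕ) [Fact p.Prime] :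
    ∃ Ψ : ∀ n : ℤ, (ℤ × ℤ) →+ EndPdeg p n,
      -- a map of graded rings:
      (∀ (m n : ℤ) (a b : ℤ × ℤ), Ψ (m + n) (mulA m a b) = mulE p n (Ψ m a) (Ψ n b)) ∧
      (Ψ 0 (1, 0) = fun _ => 1) ∧
      -- sending the generators `x`, `e`, `y` to `X`, `E`, `Y`:
      (Ψ 1 (1, 0) = Xe p) ∧ (Ψ 1 (0, 1) = Ee p) ∧ (Ψ (-1) (1, 0) = Ye p) ∧
      -- commuting with the differentials:
      (∀ (n : ℤ) (a : ℤ × ℤ), Ψ (n - 1) (dA p a) = endPd p n (Ψ n a)) ∧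
      -- surjective on homology:
      (∀ (n : ℤ) (f : EndPdeg p n), endPd p n f = 0 →
        ∃ a : ℤ × ℤ, dA p a = (0, 0) ∧ ∃ g : EndPdeg p (n + 1),
          endPd p (n + 1) g = f - Ψ n a) ∧
      -- injective on homology:
      (∀ (n : ℤ) (a : ℤ × ℤ), dA p a = (0, 0) →
        (∃ g : EndPdeg p (n + 1), endPd p (n + 1) g = Ψ n a) →
        ∃ b : ℤ × ℤ, dA p b = a) := by
  have hp : p ≠ 0 := (Fact.out : p.Prime).ne_zero
  exact ⟨toEndP p, toEndP_mulA p, toEndP_one p, toEndP_x p, toEndP_e p, toEndP_y p,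
    toEndP_dA p, toEndP_homology_surjective hp, toEndP_homology_injective hp⟩
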